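/- arXiv:2202.10391 — 3 statements merged into one kernel-verified Lean document; each statement's English description precedes it below -/
import Mathlib

section
/- Let n ∈ ℕ, let A be a compact metric space, let S : ℝⁿ × A × ℝ → ℝⁿ be continuous, and fix t₀, t ∈ ℕ. Let b₁, b₂ ∈ ℝⁿ, let ν₀ be a Borel probability measure on ℝ with finite first moment, and let ρ ≥ 0. Suppose x_k → x₀ in ℝⁿ, a_k → a₀ in A, and f_k, f₀, F_k, F₀ are Borel probability measures on ℝ with finite first moment satisfying W₁(f_k, f₀) → 0 and W₁(F_k, F₀) → 0. Then limsup_{k} F_k( { z ∈ ℝ : S(x_k, a_k, z) ∈ [b₁, b₂] and W₁(R(t, f_k, z), ν₀) ≤ ρ } ) ≤ F₀( { z ∈ ℝ : S(x₀, a₀, z) ∈ [b₁, b₂] and W₁(R(t, f₀, z), ν₀) ≤ ρ } ), where [b₁, b₂] denotes the product of coordinate intervals ∏ᵢ [b₁⁽ⁱ⁾, b₂⁽ⁱ⁾]. -/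
open MeasureTheory Filter Topology
open scoped ENNReal

/-- Wasserstein-1 distance via the Kantorovich–Rubinstein dual formula, taking the
supremum over bounded 1-Lipschitz test functions. -/
noncomputable def W1 (μ ν : Measure ℝ) : ℝ :=
  sSup {d : ℝ | ∃ f : ℝ → ℝ, LipschitzWith 1 f ∧ (∃ C, ∀ x, |f x| ≤ C) ∧
    d = (∫ x, f x ∂μ) - ∫ x, f x ∂ν}

/-- The empirical-distribution update map
`R(t,F,z) = ((t₀+t)/(t₀+t+1))·F + (1/(t₀+t+1))·δ_z`. -/
noncomputable def Rupd (t₀ t : ℕ) (F : Measure ℝ) (z : ℝ) : Measure ℝ :=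
  (((t₀ : ℝ≥0∞) + t) / ((t₀ : ℝ≥0∞) + t + 1)) • F +
    (1 / ((t₀ : ℝ≥0∞) + t + 1)) • Measure.dirac z

/-!
Three estimates on `z ↦ W1 (Rupd t₀ t f z) ν₀`: it is 1-Lipschitz, it changes by at most
`W1 f' f` when `f` is replaced by `f'`, and on the sublevel set `{W1 ≤ ρ}` the point `z` is bounded
by `(t₀ + t + 1) (ρ + ∫ |x| dν₀)`. On that bounded set `S (xk, ak, ·) → S (x0, a0, ·)` uniformly,
so for every `ε > 0` the `k`-th set is eventually contained in the closed set `E ε` on which the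
limiting constraints hold up to `ε`. Convergence in `W1` implies weak convergence, so by the
portmanteau theorem the limsup is at most `F0 (E ε)`, and `E ε` decreases to the limiting set as
`ε → 0`.
-/

section W1

variable {μ ν : Measure ℝ}

lemma LipschitzWith.integrable [IsFiniteMeasure μ] {f : ℝ → ℝ} {K : NNReal}
    (hf : LipschitzWith K f) (hμ : Integrable id μ) : Integrable f μ := by
  refine ((integrable_const |f 0|).add (hμ.abs.const_mul K)).mono'
    hf.continuous.aestronglyMeasurable (ae_of_all _ fun x => ?_)
  have := hf.dist_le_mul x 0
  rw [Real.dist_eq, Real.dist_eq, sub_zero] at this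
  simp only [Real.norm_eq_abs, id, Pi.add_apply]
  linarith [abs_sub_abs_le_abs_sub (f x) (f 0)]

lemma abs_integral_sub_apply_zero_le [IsProbabilityMeasure μ] (hμ : Integrable id μ)
    {f : ℝ → ℝ} (hf : LipschitzWith 1 f) : |∫ x, f x ∂μ - f 0| ≤ ∫ x, |x| ∂μ := by
  have hfi := hf.integrable hμ
  have hsub : ∫ x, f x ∂μ - f 0 = ∫ x, (f x - f 0) ∂μ := by
    rw [integral_sub hfi (integrable_const _), integral_const, probReal_univ, one_smul]
  rw [hsub]
  refine abs_integral_le_integral_abs.trans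
    (integral_mono (hfi.sub (integrable_const _)).abs hμ.abs fun x => ?_)
  simpa [Real.dist_eq] using hf.dist_le_mul x 0

/-- Without finite first moments the supremum defining `W1` can be unbounded, and then `W1` is
the junk value `sSup ∅ = 0`. -/
lemma bddAbove_W1 [IsProbabilityMeasure μ] [IsProbabilityMeasure ν] (hμ : Integrable id μ)
    (hν : Integrable id ν) :
    BddAbove {d : ℝ | ∃ f : ℝ → ℝ, LipschitzWith 1 f ∧ (∃ C, ∀ x, |f x| ≤ C) ∧
      d = (∫ x, f x ∂μ) - ∫ x, f x ∂ν} := by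
  refine ⟨(∫ x, |x| ∂μ) + ∫ x, |x| ∂ν, ?_⟩
  rintro _ ⟨f, hf, -, rfl⟩
  have hμf := abs_le.1 (abs_integral_sub_apply_zero_le hμ hf)
  have hνf := abs_le.1 (abs_integral_sub_apply_zero_le hν hf)
  linarith [hμf.2, hνf.1]

lemma integral_sub_integral_le_W1 [IsProbabilityMeasure μ] [IsProbabilityMeasure ν]
    (hμ : Integrable id μ) (hν : Integrable id ν) {f : ℝ → ℝ} (hf : LipschitzWith 1 f)
    (hb : ∃ C, ∀ x, |f x| ≤ C) : (∫ x, f x ∂μ) - ∫ x, f x ∂ν ≤ W1 μ ν :=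
  le_csSup (bddAbove_W1 hμ hν) ⟨f, hf, hb, rfl⟩

lemma abs_integral_sub_integral_le_W1 [IsProbabilityMeasure μ] [IsProbabilityMeasure ν]
    (hμ : Integrable id μ) (hν : Integrable id ν) {f : ℝ → ℝ} (hf : LipschitzWith 1 f)
    (hb : ∃ C, ∀ x, |f x| ≤ C) : |(∫ x, f x ∂μ) - ∫ x, f x ∂ν| ≤ W1 μ ν := by
  obtain ⟨C, hC⟩ := hb
  have hneg := integral_sub_integral_le_W1 hμ hν hf.neg
    ⟨C, fun x => (abs_neg (f x)).trans_le (hC x)⟩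
  simp only [Pi.neg_apply, integral_neg] at hneg
  exact abs_le.2 ⟨by linarith, integral_sub_integral_le_W1 hμ hν hf ⟨C, hC⟩⟩

lemma W1_nonneg [IsProbabilityMeasure μ] [IsProbabilityMeasure ν] (hμ : Integrable id μ)
    (hν : Integrable id ν) : 0 ≤ W1 μ ν := by
  simpa using integral_sub_integral_le_W1 hμ hν (LipschitzWith.const' (0 : ℝ)) ⟨0, by simp⟩

lemma W1_le {r : ℝ} (h : ∀ f : ℝ → ℝ, LipschitzWith 1 f → (∃ C, ∀ x, |f x| ≤ C) →
      (∫ x, f x ∂μ) - ∫ x, f x ∂ν ≤ r) : W1 μ ν ≤ r := by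
  refine csSup_le ⟨0, fun _ => 0, LipschitzWith.const' 0, ⟨0, by simp⟩, by simp⟩ ?_
  rintro _ ⟨f, hf, hb, rfl⟩
  exact h f hf hb

end W1

section Rupd

variable (t₀ t : ℕ) {μ : Measure ℝ} (z : ℝ)

instance [IsProbabilityMeasure μ] : IsProbabilityMeasure (Rupd t₀ t μ z) := by
  constructor
  simp only [Rupd, Measure.add_apply, Measure.smul_apply, measure_univ, smul_eq_mul, mul_one,
    ENNReal.div_add_div_same]
  exact ENNReal.div_self (by simp) (by simp)

variable {t₀ t z}

lemma integrable_Rupd {f : ℝ → ℝ} (hf : Integrable f μ) : Integrable f (Rupd t₀ t μ z) :=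
  (hf.smul_measure (ENNReal.div_ne_top (by simp) (by simp))).add_measure
    ((integrable_dirac (by simp)).smul_measure (ENNReal.div_ne_top (by simp) (by simp)))

lemma integral_Rupd {f : ℝ → ℝ} (hf : Integrable f μ) :
    ∫ x, f x ∂(Rupd t₀ t μ z) = ((t₀ + t) * ∫ x, f x ∂μ + f z) / (t₀ + t + 1) := by
  have hN : ((t₀ : ℝ≥0∞) + t + 1).toReal = t₀ + t + 1 := by norm_cast
  have ht : ((t₀ : ℝ≥0∞) + t).toReal = t₀ + t := by norm_cast
  rw [Rupd, integral_add_measure (hf.smul_measure (ENNReal.div_ne_top (by simp) (by simp)))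
    ((integrable_dirac (by simp)).smul_measure (ENNReal.div_ne_top (by simp) (by simp))),
    integral_smul_measure, integral_smul_measure, integral_dirac, ENNReal.toReal_div,
    ENNReal.toReal_div, hN, ht, ENNReal.toReal_one, smul_eq_mul, smul_eq_mul]
  ring

end Rupd

section RupdW1

variable {t₀ t : ℕ} {μ μ' ν : Measure ℝ} [IsProbabilityMeasure μ] [IsProbabilityMeasure ν]

lemma W1_Rupd_le_W1_Rupd_add [IsProbabilityMeasure μ'] (hμ : Integrable id μ)
    (hμ' : Integrable id μ') (hν : Integrable id ν) (z : ℝ) :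
    W1 (Rupd t₀ t μ z) ν ≤ W1 (Rupd t₀ t μ' z) ν + W1 μ' μ := by
  refine W1_le fun f hf hb => ?_
  have hcoef : (t₀ + t) / (t₀ + t + 1 : ℝ) ≤ 1 := by
    rw [div_le_one (by positivity)]; linarith
  have hμμ' : ∫ x, f x ∂μ - ∫ x, f x ∂μ' ≤ W1 μ' μ := by
    linarith [(abs_le.1 (abs_integral_sub_integral_le_W1 hμ' hμ hf hb)).1]
  calc ∫ x, f x ∂(Rupd t₀ t μ z) - ∫ x, f x ∂ν
      = (∫ x, f x ∂(Rupd t₀ t μ' z) - ∫ x, f x ∂ν)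
        + (t₀ + t) / (t₀ + t + 1) * (∫ x, f x ∂μ - ∫ x, f x ∂μ') := by
        rw [integral_Rupd (hf.integrable hμ), integral_Rupd (hf.integrable hμ')]
        ring
    _ ≤ W1 (Rupd t₀ t μ' z) ν + W1 μ' μ :=
        add_le_add (integral_sub_integral_le_W1 (integrable_Rupd hμ') hν hf hb)
          ((mul_le_mul_of_nonneg_left hμμ' (by positivity)).trans
            (mul_le_of_le_one_left (W1_nonneg hμ' hμ) hcoef))

lemma lipschitzWith_W1_Rupd (hμ : Integrable id μ) (hν : Integrable id ν) :
    LipschitzWith 1 fun z => W1 (Rupd t₀ t μ z) ν := by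
  refine LipschitzWith.of_le_add fun z z' => W1_le fun f hf hb => ?_
  have hN : (1 : ℝ) ≤ t₀ + t + 1 := by linarith [(by positivity : (0 : ℝ) ≤ t₀ + t)]
  have hfz : f z - f z' ≤ dist z z' :=
    (le_abs_self _).trans (by simpa [Real.dist_eq] using hf.dist_le_mul z z')
  calc ∫ x, f x ∂(Rupd t₀ t μ z) - ∫ x, f x ∂ν
      = (∫ x, f x ∂(Rupd t₀ t μ z') - ∫ x, f x ∂ν) + (f z - f z') / (t₀ + t + 1) := by
        rw [integral_Rupd (hf.integrable hμ), integral_Rupd (hf.integrable hμ)]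
        ring
    _ ≤ W1 (Rupd t₀ t μ z') ν + dist z z' :=
        add_le_add (integral_sub_integral_le_W1 (integrable_Rupd hμ) hν hf hb)
          ((div_le_div_of_nonneg_right hfz (by positivity)).trans (div_le_self dist_nonneg hN))

/-- Tested against `x ↦ min |x| |z|`, the atom of mass `1 / (t₀ + t + 1)` at `z` is at least
`|z| / (t₀ + t + 1)` away from `ν`. -/
lemma abs_le_of_W1_Rupd_le (hμ : Integrable id μ) (hν : Integrable id ν) {ρ z : ℝ}
    (hz : W1 (Rupd t₀ t μ z) ν ≤ ρ) : |z| ≤ (t₀ + t + 1) * (ρ + ∫ x, |x| ∂ν) := by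
  set f : ℝ → ℝ := fun x => min |x| |z|
  have hf : LipschitzWith 1 f := lipschitzWith_one_norm.min_const |z|
  have hf0 : ∀ x, 0 ≤ f x := fun x => le_min (abs_nonneg x) (abs_nonneg z)
  have hfb : ∀ x, |f x| ≤ |z| := fun x => (abs_of_nonneg (hf0 x)).trans_le (min_le_right _ _)
  have hW := (integral_sub_integral_le_W1 (integrable_Rupd hμ) hν hf ⟨|z|, hfb⟩).trans hz
  rw [integral_Rupd (hf.integrable hμ), show f z = |z| from min_self _] at hW
  have hμf : 0 ≤ ∫ x, f x ∂μ := integral_nonneg hf0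
  have hνf : ∫ x, f x ∂ν ≤ ∫ x, |x| ∂ν :=
    integral_mono (hf.integrable hν) hν.abs fun x => min_le_left _ _
  have hN : (0 : ℝ) < t₀ + t + 1 := by positivity
  rw [← div_le_iff₀' hN]
  calc |z| / (t₀ + t + 1) ≤ ((t₀ + t) * ∫ x, f x ∂μ + |z|) / (t₀ + t + 1) :=
        div_le_div_of_nonneg_right (le_add_of_nonneg_left (mul_nonneg (by positivity) hμf)) hN.le
    _ ≤ ρ + ∫ x, |x| ∂ν := by linarith

end RupdW1

lemma tendsto_probabilityMeasure_of_tendsto_W1 {ι : Type*} {L : Filter ι}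
    [L.IsCountablyGenerated] {μs : ι → ProbabilityMeasure ℝ} {μ : ProbabilityMeasure ℝ}
    (hμs : ∀ i, Integrable id (μs i : Measure ℝ)) (hμ : Integrable id (μ : Measure ℝ))
    (h : Tendsto (fun i => W1 (μs i) μ) L (𝓝 0)) : Tendsto μs L (𝓝 μ) := by
  refine tendsto_iff_forall_lipschitz_integral_tendsto.2 fun f ⟨C, hC⟩ ⟨K, hK⟩ => ?_
  have hK1 : (0 : ℝ) < K + 1 := by positivity
  have hg : LipschitzWith 1 fun x => f x / (K + 1) := by
    refine LipschitzWith.of_dist_le_mul fun x y => ?_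
    rw [Real.dist_eq, ← sub_div, abs_div, abs_of_pos hK1, NNReal.coe_one, one_mul,
      div_le_iff₀ hK1]
    have := hK.dist_le_mul x y
    rw [Real.dist_eq] at this
    nlinarith [dist_nonneg (x := x) (y := y)]
  have hgb : ∃ B, ∀ x, |f x / (K + 1)| ≤ B := by
    refine ⟨(|f 0| + C) / (K + 1), fun x => ?_⟩
    rw [abs_div, abs_of_pos hK1]
    gcongr
    have := hC x 0
    rw [Real.dist_eq] at this
    linarith [abs_sub_abs_le_abs_sub (f x) (f 0)]
  have hbound : ∀ i, |∫ x, f x ∂(μs i : Measure ℝ) - ∫ x, f x ∂(μ : Measure ℝ)|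
      ≤ (K + 1) * W1 (μs i) μ := fun i => by
    have := abs_integral_sub_integral_le_W1 (hμs i) hμ hg hgb
    rwa [integral_div, integral_div, ← sub_div, abs_div, abs_of_pos hK1, div_le_iff₀' hK1] at this
  rw [tendsto_iff_norm_sub_tendsto_zero]
  exact squeeze_zero (fun _ => norm_nonneg _) hbound (by simpa using h.const_mul (K + 1 : ℝ))

lemma eventually_forall_dist_lt_of_tendsto {ι X Y Z : Type*} [TopologicalSpace X]
    [TopologicalSpace Y] [PseudoMetricSpace Z] {g : X → Y → Z}
    (hg : Continuous (Function.uncurry g)) {K : Set Y} (hK : IsCompact K) {L : Filter ι}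
    {p : ι → X} {x : X} (hp : Tendsto p L (𝓝 x)) {ε : ℝ} (hε : 0 < ε) :
    ∀ᶠ i in L, ∀ y ∈ K, dist (g (p i) y) (g x y) < ε := by
  obtain ⟨v, hv, hvK⟩ := hK.mem_uniformity_of_prod hg.continuousOn (Set.mem_univ x)
    (Metric.dist_mem_uniformity hε)
  rw [nhdsWithin_univ] at hv
  exact mem_of_superset (hp hv) fun i hi y hy => hvK _ hi y hy

lemma limsup_measure_le_measure_biInter_of_eventually_subset {Ω ι : Type*}
    [MeasurableSpace Ω] [TopologicalSpace Ω] [OpensMeasurableSpace Ω] [HasOuterApproxClosed Ω]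
    {L : Filter ι} {μs : ι → ProbabilityMeasure Ω} {μ : ProbabilityMeasure Ω}
    (hμ : Tendsto μs L (𝓝 μ)) {s : ι → Set Ω} {E : ℝ → Set Ω} (hE : ∀ ε > 0, IsClosed (E ε))
    (hmono : Monotone E) (hsE : ∀ ε > 0, ∀ᶠ i in L, s i ⊆ E ε) :
    limsup (fun i => (μs i : Measure Ω) (s i)) L ≤ (μ : Measure Ω) (⋂ ε > 0, E ε) := by
  have hlim := tendsto_measure_biInter_gt (μ := (μ : Measure Ω))
    (fun ε hε => (hE ε hε).measurableSet.nullMeasurableSet) (fun _ _ _ h => hmono h)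
    ⟨1, one_pos, measure_ne_top _ _⟩
  refine ge_of_tendsto hlim (eventually_nhdsWithin_of_forall fun ε (hε : 0 < ε) => ?_)
  exact (limsup_le_limsup ((hsE ε hε).mono fun i hi => measure_mono hi)).trans
    (ProbabilityMeasure.limsup_measure_closed_le_of_tendsto hμ (hE ε hε))

lemma biInter_cthickening_le_add_eq {α Y : Type*} [PseudoMetricSpace Y] {B : Set Y}
    (hB : IsClosed B) (g : α → Y) (w : α → ℝ) (ρ : ℝ) :
    ⋂ ε > 0, {z | g z ∈ Metric.cthickening ε B ∧ w z ≤ ρ + ε} = {z | g z ∈ B ∧ w z ≤ ρ} := by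
  ext z
  simp only [Set.mem_iInter, Set.mem_ofPred_eq]
  refine ⟨fun h => ⟨?_, le_of_forall_pos_le_add fun ε hε => (h ε hε).2⟩,
    fun h ε _ => ⟨Metric.self_subset_cthickening _ h.1, by linarith [h.2]⟩⟩
  rw [← hB.closure_eq, Metric.closure_eq_iInter_cthickening]
  exact Set.mem_iInter₂.2 fun ε hε => (h ε hε).1


theorem kernel_upper_semicontinuous_general (n : ℕ) {A : Type*} [MetricSpace A]
    (S : (Fin n → ℝ) × A × ℝ → Fin n → ℝ) (hS : Continuous S)
    (t₀ t : ℕ) (b₁ b₂ : Fin n → ℝ)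
    (ν₀ : Measure ℝ) [IsProbabilityMeasure ν₀] (hν₀ : Integrable id ν₀)
    (ρ : ℝ)
    (xk : ℕ → Fin n → ℝ) (x0 : Fin n → ℝ) (hx : Tendsto xk atTop (nhds x0))
    (ak : ℕ → A) (a0 : A) (ha : Tendsto ak atTop (nhds a0))
    (fk : ℕ → Measure ℝ) (f0 : Measure ℝ)
    [∀ k, IsProbabilityMeasure (fk k)] [IsProbabilityMeasure f0]
    (hfk : ∀ k, Integrable id (fk k)) (hf0 : Integrable id f0)
    (Fk : ℕ → Measure ℝ) (F0 : Measure ℝ)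
    [∀ k, IsProbabilityMeasure (Fk k)] [IsProbabilityMeasure F0]
    (hFk : ∀ k, Integrable id (Fk k)) (hF0 : Integrable id F0)
    (hf : Tendsto (fun k => W1 (fk k) f0) atTop (nhds 0))
    (hF : Tendsto (fun k => W1 (Fk k) F0) atTop (nhds 0)) :
    limsup (fun k =>
        (Fk k {z : ℝ | S (xk k, ak k, z) ∈ Set.Icc b₁ b₂ ∧
          W1 (Rupd t₀ t (fk k) z) ν₀ ≤ ρ}).toReal) atTop ≤
      (F0 {z : ℝ | S (x0, a0, z) ∈ Set.Icc b₁ b₂ ∧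
        W1 (Rupd t₀ t f0 z) ν₀ ≤ ρ}).toReal := by
  set E : ℝ → Set ℝ := fun ε => {z | S (x0, a0, z) ∈ Metric.cthickening ε (Set.Icc b₁ b₂) ∧
    W1 (Rupd t₀ t f0 z) ν₀ ≤ ρ + ε}
  have hE : ∀ ε, IsClosed (E ε) := fun ε =>
    (Metric.isClosed_cthickening.preimage (by fun_prop)).inter
      (isClosed_le (lipschitzWith_W1_Rupd hf0 hν₀).continuous continuous_const)
  have hmono : Monotone E := fun ε ε' h z hz =>
    ⟨Metric.cthickening_mono h _ hz.1, by linarith [hz.2]⟩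
  have hsub : ∀ ε > 0, ∀ᶠ k in atTop, {z : ℝ | S (xk k, ak k, z) ∈ Set.Icc b₁ b₂ ∧
      W1 (Rupd t₀ t (fk k) z) ν₀ ≤ ρ} ⊆ E ε := by
    intro ε hε
    filter_upwards [eventually_forall_dist_lt_of_tendsto (g := fun p z => S (p.1, p.2, z))
      (by fun_prop) (isCompact_closedBall 0 ((t₀ + t + 1) * (ρ + ∫ x, |x| ∂ν₀)))
      (hx.prodMk_nhds ha) hε, hf.eventually (eventually_le_nhds hε)] with k hSk hWk z ⟨hzB, hzW⟩
    have hz := abs_le_of_W1_Rupd_le (hfk k) hν₀ hzW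
    refine ⟨Metric.mem_cthickening_of_dist_le _ _ _ _ hzB ?_, ?_⟩
    · exact dist_comm (S (x0, a0, z)) _ ▸ (hSk z (by simpa using hz)).le
    · linarith [W1_Rupd_le_W1_Rupd_add hf0 (hfk k) hν₀ z (t₀ := t₀) (t := t)]
  have hlim := limsup_measure_le_measure_biInter_of_eventually_subset
    (μs := fun k => ⟨Fk k, inferInstance⟩) (μ := ⟨F0, inferInstance⟩)
    (tendsto_probabilityMeasure_of_tendsto_W1 hFk hF0 hF) (fun ε _ => hE ε) hmono hsub
  rw [biInter_cthickening_le_add_eq isClosed_Icc _ _ ρ] at hlim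
  rw [ENNReal.limsup_toReal_eq ENNReal.one_ne_top (.of_forall fun k => prob_le_one)]
  exact ENNReal.toReal_mono (measure_ne_top _ _) hlim

theorem kernel_upper_semicontinuous (n : ℕ) {A : Type*} [MetricSpace A] [CompactSpace A]
    (S : (Fin n → ℝ) × A × ℝ → Fin n → ℝ) (hS : Continuous S)
    (t₀ t : ℕ) (b₁ b₂ : Fin n → ℝ)
    (ν₀ : Measure ℝ) [IsProbabilityMeasure ν₀] (hν₀ : Integrable id ν₀)
    (ρ : ℝ) (hρ : 0 ≤ ρ)
    (xk : ℕ → Fin n → ℝ) (x0 : Fin n → ℝ) (hx : Tendsto xk atTop (nhds x0))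
    (ak : ℕ → A) (a0 : A) (ha : Tendsto ak atTop (nhds a0))
    (fk : ℕ → Measure ℝ) (f0 : Measure ℝ)
    [∀ k, IsProbabilityMeasure (fk k)] [IsProbabilityMeasure f0]
    (hfk : ∀ k, Integrable id (fk k)) (hf0 : Integrable id f0)
    (Fk : ℕ → Measure ℝ) (F0 : Measure ℝ)
    [∀ k, IsProbabilityMeasure (Fk k)] [IsProbabilityMeasure F0]
    (hFk : ∀ k, Integrable id (Fk k)) (hF0 : Integrable id F0)
    (hf : Tendsto (fun k => W1 (fk k) f0) atTop (nhds 0))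
    (hF : Tendsto (fun k => W1 (Fk k) F0) atTop (nhds 0)) :
    limsup (fun k =>
        (Fk k {z : ℝ | S (xk k, ak k, z) ∈ Set.Icc b₁ b₂ ∧
          W1 (Rupd t₀ t (fk k) z) ν₀ ≤ ρ}).toReal) atTop ≤
      (F0 {z : ℝ | S (x0, a0, z) ∈ Set.Icc b₁ b₂ ∧
        W1 (Rupd t₀ t f0 z) ν₀ ≤ ρ}).toReal :=
  kernel_upper_semicontinuous_general n S hS t₀ t b₁ b₂ ν₀ hν₀ ρ xk x0 hx ak a0 ha fk f0 hfk hf0 Fk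
    F0 hFk hF0 hf hF
end

section
/- Let ν be a Borel probability measure on ℝ with finite first moment, let r ≥ 0, and let B = { μ : μ a Borel probability measure on ℝ such that ∫ f dμ − ∫ f dν ≤ r for every bounded 1-Lipschitz f : ℝ → ℝ }. Let v be a real-valued function on Borel probability measures on ℝ that is bounded below and lower semicontinuous with respect to the topology of weak convergence. Then there exists F* ∈ B with v(F*) = inf_{F ∈ B} v(F), i.e. the infimum of v over the Wasserstein ball B is attained. -/
/-!
The ball is weakly closed, since it is cut out by the conditions `∫ f dμ ≤ ∫ f dν + r` with `f`
bounded and continuous. It is tight: testing against `f = min (infDist · K) L` shows that the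
mass `μ` puts outside the `L`-thickening of `K` is at most `ν Kᶜ + r / L`, so the tails of the
ball are controlled by those of `ν`. By Prokhorov's theorem the ball is compact, and a lower
semicontinuous function attains its infimum on a nonempty compact set.
-/

open MeasureTheory Metric Set Filter Topology

section PseudoMetricSpace

variable {X : Type*} [PseudoMetricSpace X] [MeasurableSpace X]

def boundedLipschitzBall (ν : ProbabilityMeasure X) (r : ℝ) : Set (ProbabilityMeasure X) :=
  {μ | ∀ f : X → ℝ, LipschitzWith 1 f → (∃ C, ∀ x, |f x| ≤ C) →
    (∫ x, f x ∂(μ : Measure X)) - ∫ x, f x ∂(ν : Measure X) ≤ r}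

lemma self_mem_boundedLipschitzBall (ν : ProbabilityMeasure X) {r : ℝ} (hr : 0 ≤ r) :
    ν ∈ boundedLipschitzBall ν r :=
  fun _ _ _ => by simpa using hr

variable [OpensMeasurableSpace X]

lemma isClosed_setOf_integral_le {f : X → ℝ} (hf : Continuous f) {C : ℝ} (hC : ∀ x, |f x| ≤ C)
    (c : ℝ) : IsClosed {μ : ProbabilityMeasure X | ∫ x, f x ∂(μ : Measure X) ≤ c} :=
  isClosed_le (ProbabilityMeasure.continuous_integral_boundedContinuousFunction
    (.ofNormedAddCommGroup f hf C fun x => (Real.norm_eq_abs _).trans_le (hC x)))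
    continuous_const

lemma isClosed_boundedLipschitzBall (ν : ProbabilityMeasure X) (r : ℝ) :
    IsClosed (boundedLipschitzBall ν r) := by
  simp only [boundedLipschitzBall, sub_le_iff_le_add, ofPred_forall]
  exact isClosed_iInter fun f => isClosed_iInter fun hf => isClosed_iInter fun ⟨_, hC⟩ =>
    isClosed_setOf_integral_le hf.continuous hC _

lemma measure_compl_thickening_le {ν μ : ProbabilityMeasure X} {r : ℝ}
    (hμ : μ ∈ boundedLipschitzBall ν r) {K : Set X} (hK : IsClosed K) (hK_ne : K.Nonempty)
    {L : ℝ} (hL : 0 < L) :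
    (μ : Measure X) (thickening L K)ᶜ ≤ (ν : Measure X) Kᶜ + ENNReal.ofReal (r / L) := by
  set f : X → ℝ := fun y => min (infDist y K) L
  have hf_lip : LipschitzWith 1 f := (lipschitz_infDist_pt K).min_const L
  have hf_nonneg : ∀ y, 0 ≤ f y := fun y => le_min infDist_nonneg hL.le
  have hf_bdd : ∀ y, |f y| ≤ L := fun y => by
    rw [abs_of_nonneg (hf_nonneg y)]
    exact min_le_right _ _
  have hf_int : ∀ ρ : ProbabilityMeasure X, Integrable f ρ := fun ρ =>
    (BoundedContinuousFunction.ofNormedAddCommGroup f hf_lip.continuous L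
      fun y => (Real.norm_eq_abs _).trans_le (hf_bdd y)).integrable (ρ : Measure X)
  have h_lower : (thickening L K)ᶜ.indicator (fun _ => L) ≤ f :=
    Set.indicator_le' (fun y hy => le_min (by
      rwa [mem_compl_iff, mem_thickening_iff_infDist_lt hK_ne, not_lt] at hy) le_rfl)
      (fun y _ => hf_nonneg y)
  have h_upper : f ≤ Kᶜ.indicator (fun _ => L) :=
    Set.le_indicator (fun y _ => min_le_right _ _)
      (fun y hy => (min_le_left _ _).trans (infDist_zero_of_mem (not_notMem.1 hy)).le)
  have h_markov : L * (μ : Measure X).real (thickening L K)ᶜ ≤ L * (ν : Measure X).real Kᶜ + r :=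
    calc L * (μ : Measure X).real (thickening L K)ᶜ
        = ∫ y, (thickening L K)ᶜ.indicator (fun _ => L) y ∂(μ : Measure X) := by
          rw [integral_indicator_const _ isOpen_thickening.measurableSet.compl, smul_eq_mul,
            mul_comm]
      _ ≤ ∫ y, f y ∂(μ : Measure X) :=
          integral_mono ((integrable_const L).indicator isOpen_thickening.measurableSet.compl)
            (hf_int μ) h_lower
      _ ≤ ∫ y, f y ∂(ν : Measure X) + r := by linarith [hμ f hf_lip ⟨L, hf_bdd⟩]
      _ ≤ ∫ y, Kᶜ.indicator (fun _ => L) y ∂(ν : Measure X) + r :=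
          add_le_add_left (integral_mono (hf_int ν)
            ((integrable_const L).indicator hK.measurableSet.compl) h_upper) r
      _ = L * (ν : Measure X).real Kᶜ + r := by
          rw [integral_indicator_const _ hK.measurableSet.compl, smul_eq_mul, mul_comm]
  have h_real : (μ : Measure X).real (thickening L K)ᶜ ≤ (ν : Measure X).real Kᶜ + r / L := by
    rw [← sub_le_iff_le_add', le_div_iff₀ hL]
    nlinarith
  rw [← ofReal_measureReal, ← ofReal_measureReal]
  exact (ENNReal.ofReal_le_ofReal h_real).trans ENNReal.ofReal_add_le

end PseudoMetricSpace

section ProperSpace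

variable {X : Type*} [MetricSpace X] [ProperSpace X] [MeasurableSpace X] [BorelSpace X]

lemma isTightMeasureSet_boundedLipschitzBall (ν : ProbabilityMeasure X) (r : ℝ) :
    IsTightMeasureSet {(μ : Measure X) | μ ∈ boundedLipschitzBall ν r} := by
  obtain ⟨x⟩ := nonempty_of_isProbabilityMeasure (ν : Measure X)
  rw [isTightMeasureSet_iff_exists_isCompact_measure_compl_le]
  intro ε hε
  have hν_tail : Tendsto (fun R => (ν : Measure X) (closedBall x R)ᶜ) atTop (𝓝 0) := by
    simpa using tendsto_measure_compl_closedBall_of_isTightMeasureSet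
      (isTightMeasureSet_singleton (μ := (ν : Measure X))) x
  have hr_tail : Tendsto (fun L : ℝ => ENNReal.ofReal (r / L)) atTop (𝓝 0) := by
    simpa using ENNReal.tendsto_ofReal (tendsto_const_nhds.div_atTop tendsto_id)
  obtain ⟨R, hR⟩ := ENNReal.tendsto_atTop_zero.1 hν_tail (ε / 2) (ENNReal.half_pos hε.ne')
  obtain ⟨L, hL⟩ := ENNReal.tendsto_atTop_zero.1 hr_tail (ε / 2) (ENNReal.half_pos hε.ne')
  set R' := max R 0
  set L' := max L 1
  refine ⟨cthickening L' (closedBall x R'), (isCompact_closedBall x R').cthickening, ?_⟩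
  rintro _ ⟨μ, hμ, rfl⟩
  calc (μ : Measure X) (cthickening L' (closedBall x R'))ᶜ
      ≤ (μ : Measure X) (thickening L' (closedBall x R'))ᶜ :=
        measure_mono (compl_subset_compl.2 (thickening_subset_cthickening _ _))
    _ ≤ (ν : Measure X) (closedBall x R')ᶜ + ENNReal.ofReal (r / L') :=
        measure_compl_thickening_le hμ isClosed_closedBall
          (nonempty_closedBall.2 (le_max_right _ _)) (zero_lt_one.trans_le (le_max_right _ _))
    _ ≤ ε / 2 + ε / 2 := add_le_add (hR _ (le_max_left _ _)) (hL _ (le_max_left _ _))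
    _ = ε := ENNReal.add_halves ε

lemma isCompact_boundedLipschitzBall (ν : ProbabilityMeasure X) (r : ℝ) :
    IsCompact (boundedLipschitzBall ν r) :=
  (isClosed_boundedLipschitzBall ν r).closure_eq ▸
    isCompact_closure_of_isTightMeasureSet (isTightMeasureSet_boundedLipschitzBall ν r)

end ProperSpace

theorem inf_attained_on_wasserstein_ball_general (ν : ProbabilityMeasure ℝ)
    (r : ℝ) (hr : 0 ≤ r)
    (v : ProbabilityMeasure ℝ → ℝ)
    (hlsc : LowerSemicontinuous v) :
    ∃ Fstar ∈ {μ : ProbabilityMeasure ℝ |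
        ∀ f : ℝ → ℝ, LipschitzWith 1 f → (∃ C, ∀ x, |f x| ≤ C) →
          (∫ x, f x ∂(μ : Measure ℝ)) - ∫ x, f x ∂(ν : Measure ℝ) ≤ r},
      ∀ F ∈ {μ : ProbabilityMeasure ℝ |
        ∀ f : ℝ → ℝ, LipschitzWith 1 f → (∃ C, ∀ x, |f x| ≤ C) →
          (∫ x, f x ∂(μ : Measure ℝ)) - ∫ x, f x ∂(ν : Measure ℝ) ≤ r},
        v Fstar ≤ v F := by
  obtain ⟨Fstar, hFstar, hmin⟩ := (hlsc.lowerSemicontinuousOn _).exists_isMinOn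
    ⟨ν, self_mem_boundedLipschitzBall ν hr⟩ (isCompact_boundedLipschitzBall ν r)
  exact ⟨Fstar, hFstar, isMinOn_iff.1 hmin⟩

theorem inf_attained_on_wasserstein_ball (ν : ProbabilityMeasure ℝ)
    (hν : Integrable id (ν : Measure ℝ)) (r : ℝ) (hr : 0 ≤ r)
    (v : ProbabilityMeasure ℝ → ℝ) (hbdd : ∃ c : ℝ, ∀ μ, c ≤ v μ)
    (hlsc : LowerSemicontinuous v) :
    ∃ Fstar ∈ {μ : ProbabilityMeasure ℝ |
        ∀ f : ℝ → ℝ, LipschitzWith 1 f → (∃ C, ∀ x, |f x| ≤ C) →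
          (∫ x, f x ∂(μ : Measure ℝ)) - ∫ x, f x ∂(ν : Measure ℝ) ≤ r},
      ∀ F ∈ {μ : ProbabilityMeasure ℝ |
        ∀ f : ℝ → ℝ, LipschitzWith 1 f → (∃ C, ∀ x, |f x| ≤ C) →
          (∫ x, f x ∂(μ : Measure ℝ)) - ∫ x, f x ∂(ν : Measure ℝ) ≤ r},
        v Fstar ≤ v F :=
  inf_attained_on_wasserstein_ball_general ν r hr v hlsc
end

section
/- Let n ∈ ℕ, let A be a metric space, let r ≥ 0, and let v be a bounded real-valued function of (x, a, F) ∈ ℝⁿ × A × {Borel probability measures on ℝ} that is jointly lower semicontinuous when the measure argument carries the topology of weak convergence. For x ∈ ℝⁿ, a ∈ A, and a Borel probability measure f on ℝ with finite first moment, define ṽ(x, f, a) = inf { v(x, a, F) : F a Borel probability measure on ℝ with W₁(F, f) ≤ r }. If (x_k, a_k) → (x₀, a₀) and W₁(f_k, f₀) → 0 (all f_k, f₀ having finite first moment), then liminf_{k→∞} ṽ(x_k, f_k, a_k) ≥ ṽ(x₀, f₀, a₀); that is, ṽ is lower semicontinuous. -/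
open MeasureTheory Filter Topology
open scoped ENNReal

/-- Wasserstein-1 distance via the Kantorovich–Rubinstein dual formula, the supremum
over bounded 1-Lipschitz test functions being taken in `[0,∞]`. -/
noncomputable def W1e (μ ν : Measure ℝ) : ℝ≥0∞ :=
  ⨆ f ∈ {f : ℝ → ℝ | LipschitzWith 1 f ∧ ∃ C, ∀ x, |f x| ≤ C},
    ENNReal.ofReal ((∫ x, f x ∂μ) - ∫ x, f x ∂ν)

/-- The robust one-step value `ṽ(x, f, a) = inf { v(x, a, F) : W₁(F, f) ≤ r }`. -/
noncomputable def vtil {n : ℕ} {A : Type*} (r : ℝ)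
    (v : (Fin n → ℝ) → A → ProbabilityMeasure ℝ → ℝ)
    (x : Fin n → ℝ) (f : Measure ℝ) (a : A) : ℝ :=
  sInf {c : ℝ | ∃ F : ProbabilityMeasure ℝ,
    W1e (F : Measure ℝ) f ≤ ENNReal.ofReal r ∧ c = v x a F}

/-!
Choose near-optimal measures `F_k` in the radius-`r` balls around `f_k`. By the triangle inequality
they lie in a fixed `W₁`-ball around `f₀`, and a truncated Markov inequality (test function
`min ‖x‖ R`) shows such a ball is tight, so by Prokhorov a subsequence converges weakly to some
`F`. Since `W₁(·, f₀)` is a supremum of weakly continuous functions, it is weakly lower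
semicontinuous, hence `W₁(F, f₀) ≤ r`: the limit is admissible at `(x₀, f₀, a₀)`, and the lower
semicontinuity of `v` bounds `v(x₀, a₀, F)` by the liminf of the robust values.
-/

open Set

lemma ofReal_integral_sub_le_W1e (μ ν : Measure ℝ) {f : ℝ → ℝ} (hf : LipschitzWith 1 f)
    (hb : ∃ C, ∀ x, |f x| ≤ C) :
    ENNReal.ofReal ((∫ x, f x ∂μ) - ∫ x, f x ∂ν) ≤ W1e μ ν :=
  le_iSup₂_of_le f ⟨hf, hb⟩ le_rfl

@[simp]
lemma W1e_self (μ : Measure ℝ) : W1e μ μ = 0 := by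
  simp [W1e]

lemma W1e_le_add (μ κ ν : Measure ℝ) : W1e μ ν ≤ W1e μ κ + W1e κ ν := by
  refine iSup₂_le fun f ⟨hf, hb⟩ => ?_
  calc ENNReal.ofReal ((∫ x, f x ∂μ) - ∫ x, f x ∂ν)
      = ENNReal.ofReal (((∫ x, f x ∂μ) - ∫ x, f x ∂κ) + ((∫ x, f x ∂κ) - ∫ x, f x ∂ν)) := by
        ring_nf
    _ ≤ _ := ENNReal.ofReal_add_le.trans
        (add_le_add (ofReal_integral_sub_le_W1e μ κ hf hb) (ofReal_integral_sub_le_W1e κ ν hf hb))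

lemma lowerSemicontinuous_W1e (ν : Measure ℝ) :
    LowerSemicontinuous fun μ : ProbabilityMeasure ℝ => W1e μ ν := by
  refine lowerSemicontinuous_biSup fun f ⟨hf, C, hC⟩ => Continuous.lowerSemicontinuous ?_
  let fb : BoundedContinuousFunction ℝ ℝ :=
    .ofNormedAddCommGroup f hf.continuous C fun x => by simpa [Real.norm_eq_abs] using hC x
  exact ENNReal.continuous_ofReal.comp
    ((ProbabilityMeasure.continuous_integral_boundedContinuousFunction fb).sub continuous_const)

lemma measureReal_setOf_le_norm_le_of_W1e_ne_top {μ ν : Measure ℝ} [IsFiniteMeasure μ]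
    [IsFiniteMeasure ν] (hν : Integrable id ν) (hW : W1e μ ν ≠ ⊤) {R : ℝ} (hR : 0 < R) :
    μ.real {x | R ≤ ‖x‖} ≤ ((∫ x, ‖x‖ ∂ν) + (W1e μ ν).toReal) / R := by
  set g : ℝ → ℝ := fun x => min ‖x‖ R
  have hg_lip : LipschitzWith 1 g := lipschitzWith_one_norm.min_const R
  have hg_nonneg : ∀ x, 0 ≤ g x := fun x => le_min (norm_nonneg x) hR.le
  have hg_abs : ∀ x, |g x| ≤ R := fun x => abs_le.2 ⟨by linarith [hg_nonneg x], min_le_right _ _⟩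
  have hg_int : ∀ (κ : Measure ℝ) [IsFiniteMeasure κ], Integrable g κ := fun κ _ =>
    (integrable_const R).mono' hg_lip.continuous.aestronglyMeasurable
      (Eventually.of_forall fun x => by simpa [Real.norm_eq_abs] using hg_abs x)
  have hmarkov : R * μ.real {x | R ≤ g x} ≤ ∫ x, g x ∂μ :=
    mul_meas_ge_le_integral_of_nonneg (Eventually.of_forall hg_nonneg) (hg_int μ) R
  have hset : {x | R ≤ g x} = {x : ℝ | R ≤ ‖x‖} := by
    ext x
    simp [g]
  have htransport : (∫ x, g x ∂μ) - ∫ x, g x ∂ν ≤ (W1e μ ν).toReal :=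
    (ENNReal.ofReal_le_iff_le_toReal hW).1 (ofReal_integral_sub_le_W1e μ ν hg_lip ⟨R, hg_abs⟩)
  have hgν : ∫ x, g x ∂ν ≤ ∫ x, ‖x‖ ∂ν :=
    integral_mono (hg_int ν) hν.norm fun x => min_le_left _ _
  rw [hset] at hmarkov
  rw [le_div_iff₀ hR]
  linarith

lemma isTightMeasureSet_setOf_W1e_le {ν : Measure ℝ} [IsFiniteMeasure ν] (hν : Integrable id ν)
    {B : ℝ≥0∞} (hB : B ≠ ⊤) :
    IsTightMeasureSet {μ : Measure ℝ | IsFiniteMeasure μ ∧ W1e μ ν ≤ B} := by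
  refine isTightMeasureSet_of_tendsto_measure_norm_gt ?_
  have hlim : Tendsto (fun R : ℝ => ENNReal.ofReal (((∫ x, ‖x‖ ∂ν) + B.toReal) / R)) atTop
      (𝓝 0) := by
    simpa using ENNReal.tendsto_ofReal (tendsto_const_nhds.div_atTop tendsto_id)
  refine tendsto_of_tendsto_of_tendsto_of_le_of_le' tendsto_const_nhds hlim
    (Eventually.of_forall fun _ => zero_le) ?_
  filter_upwards [eventually_gt_atTop 0] with R hR
  refine iSup₂_le fun μ ⟨hμ, hWB⟩ => ?_
  have hW : W1e μ ν ≠ ⊤ := ne_top_of_le_ne_top hB hWB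
  calc μ {x | R < ‖x‖} ≤ μ {x | R ≤ ‖x‖} := measure_mono fun x (hx : R < ‖x‖) => hx.le
    _ = ENNReal.ofReal (μ.real {x | R ≤ ‖x‖}) := (ofReal_measureReal (measure_ne_top _ _)).symm
    _ ≤ _ := ENNReal.ofReal_le_ofReal <| (measureReal_setOf_le_norm_le_of_W1e_ne_top hν hW hR).trans <|
        div_le_div_of_nonneg_right (by gcongr) hR.le

lemma exists_tendsto_subseq_of_W1e_le {ν : Measure ℝ} [IsFiniteMeasure ν] (hν : Integrable id ν)
    {B : ℝ≥0∞} (hB : B ≠ ⊤) {F : ℕ → ProbabilityMeasure ℝ} (hF : ∀ k, W1e (F k) ν ≤ B) :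
    ∃ G : ProbabilityMeasure ℝ, ∃ ψ : ℕ → ℕ, StrictMono ψ ∧ Tendsto (F ∘ ψ) atTop (𝓝 G) := by
  have htight : IsTightMeasureSet {(μ : Measure ℝ) | μ ∈ range F} :=
    (isTightMeasureSet_setOf_W1e_le hν hB).subset <| by
      rintro _ ⟨_, ⟨k, rfl⟩, rfl⟩
      exact ⟨inferInstance, hF k⟩
  obtain ⟨G, -, ψ, hψ, hG⟩ := (isCompact_closure_of_isTightMeasureSet htight).tendsto_subseq
    fun k => subset_closure ⟨k, rfl⟩
  exact ⟨G, ψ, hψ, hG⟩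

lemma W1e_le_of_tendsto {ι : Type*} {l : Filter ι} [l.NeBot] {F : ι → ProbabilityMeasure ℝ}
    {G : ProbabilityMeasure ℝ} (hF : Tendsto F l (𝓝 G)) {f : ι → Measure ℝ} {ν : Measure ℝ}
    (hf : Tendsto (fun i => W1e (f i) ν) l (𝓝 0)) {r : ℝ≥0∞} (hr : ∀ i, W1e (F i) (f i) ≤ r) :
    W1e G ν ≤ r := by
  refine ENNReal.le_of_forall_pos_le_add fun δ hδ _ => ?_
  refine ((lowerSemicontinuous_W1e ν).isClosed_preimage (r + δ)).mem_of_tendsto hF ?_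
  filter_upwards [hf.eventually_lt_const (ENNReal.coe_pos.2 hδ)] with i hi
  exact (W1e_le_add _ (f i) _).trans (add_le_add (hr i) hi.le)

section RobustValue

variable {n : ℕ} {A : Type*} {r : ℝ} {v : (Fin n → ℝ) → A → ProbabilityMeasure ℝ → ℝ}
  {x : Fin n → ℝ} {a : A} {f : Measure ℝ}

lemma bddBelow_setOf_W1e_le (hv : BddBelow (range (v x a))) :
    BddBelow {c : ℝ | ∃ F : ProbabilityMeasure ℝ, W1e F f ≤ ENNReal.ofReal r ∧ c = v x a F} :=
  hv.mono <| by rintro _ ⟨F, -, rfl⟩; exact ⟨F, rfl⟩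

lemma vtil_le (hv : BddBelow (range (v x a))) {F : ProbabilityMeasure ℝ}
    (hF : W1e F f ≤ ENNReal.ofReal r) : vtil r v x f a ≤ v x a F :=
  csInf_le (bddBelow_setOf_W1e_le hv) ⟨F, hF, rfl⟩

lemma vtil_le_self [IsProbabilityMeasure f] (hv : BddBelow (range (v x a))) :
    vtil r v x f a ≤ v x a ⟨f, ‹_›⟩ :=
  vtil_le hv ((W1e_self f).trans_le zero_le)

lemma exists_lt_of_vtil_lt [IsProbabilityMeasure f] (hv : BddBelow (range (v x a))) {c : ℝ}
    (h : vtil r v x f a < c) :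
    ∃ F : ProbabilityMeasure ℝ, W1e F f ≤ ENNReal.ofReal r ∧ v x a F < c := by
  have hf : ∃ F : ProbabilityMeasure ℝ, W1e F f ≤ ENNReal.ofReal r ∧ v x a ⟨f, ‹_›⟩ = v x a F :=
    ⟨⟨f, ‹_›⟩, (W1e_self f).trans_le zero_le, rfl⟩
  obtain ⟨_, ⟨F, hF, rfl⟩, hFc⟩ := (csInf_lt_iff (bddBelow_setOf_W1e_le hv) ⟨_, hf⟩).1 h
  exact ⟨F, hF, hFc⟩

lemma vtil_le_of_frequently_vtil_lt [TopologicalSpace A] (hv : ∀ x a, BddBelow (range (v x a)))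
    (hvlsc : LowerSemicontinuous
      fun p : (Fin n → ℝ) × A × ProbabilityMeasure ℝ => v p.1 p.2.1 p.2.2)
    {xk : ℕ → Fin n → ℝ} {x0 : Fin n → ℝ} (hx : Tendsto xk atTop (𝓝 x0))
    {ak : ℕ → A} {a0 : A} (ha : Tendsto ak atTop (𝓝 a0))
    {fk : ℕ → Measure ℝ} {f0 : Measure ℝ} [∀ k, IsProbabilityMeasure (fk k)] [IsFiniteMeasure f0]
    (hf0 : Integrable id f0) (hf : Tendsto (fun k => W1e (fk k) f0) atTop (𝓝 0)) {c : ℝ}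
    (hc : ∃ᶠ k in atTop, vtil r v (xk k) (fk k) (ak k) < c) :
    vtil r v x0 f0 a0 ≤ c := by
  obtain ⟨φ, hφ, hφc⟩ :=
    extraction_of_frequently_atTop (hc.and_eventually (hf.eventually_lt_const zero_lt_one))
  choose F hFr hFc using fun k => exists_lt_of_vtil_lt (hv _ _) (hφc k).1
  have hFf0 : ∀ k, W1e (F k) f0 ≤ ENNReal.ofReal r + 1 := fun k =>
    (W1e_le_add _ (fk (φ k)) _).trans (add_le_add (hFr k) (hφc k).2.le)
  obtain ⟨G, ψ, hψ, hG⟩ := exists_tendsto_subseq_of_W1e_le hf0 (by simp) hFf0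
  have hφψ : Tendsto (φ ∘ ψ) atTop atTop := (hφ.comp hψ).tendsto_atTop
  have hGr : W1e G f0 ≤ ENNReal.ofReal r :=
    W1e_le_of_tendsto hG (hf.comp hφψ) fun k => hFr (ψ k)
  have hGc : v x0 a0 G ≤ c :=
    (hvlsc.isClosed_preimage c).mem_of_tendsto
      ((hx.comp hφψ).prodMk_nhds ((ha.comp hφψ).prodMk_nhds hG))
      (Eventually.of_forall fun k => (hFc (ψ k)).le)
  exact (vtil_le (hv x0 a0) hGr).trans hGc

end RobustValue

theorem robust_value_lsc_general (n : ℕ) {A : Type*} [MetricSpace A] (r : ℝ)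
    (v : (Fin n → ℝ) → A → ProbabilityMeasure ℝ → ℝ)
    (hvb : ∃ C : ℝ, ∀ x a F, |v x a F| ≤ C)
    (hvlsc : LowerSemicontinuous
      (fun p : (Fin n → ℝ) × A × ProbabilityMeasure ℝ => v p.1 p.2.1 p.2.2))
    (xk : ℕ → Fin n → ℝ) (x0 : Fin n → ℝ) (hx : Tendsto xk atTop (nhds x0))
    (ak : ℕ → A) (a0 : A) (ha : Tendsto ak atTop (nhds a0))
    (fk : ℕ → Measure ℝ) (f0 : Measure ℝ)
    [∀ k, IsProbabilityMeasure (fk k)] [IsProbabilityMeasure f0]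
    (hf0 : Integrable id f0)
    (hf : Tendsto (fun k => W1e (fk k) f0) atTop (nhds 0)) :
    vtil r v x0 f0 a0 ≤ liminf (fun k => vtil r v (xk k) (fk k) (ak k)) atTop := by
  obtain ⟨C, hC⟩ := hvb
  have hv : ∀ x a, BddBelow (range (v x a)) := fun x a =>
    ⟨-C, by rintro _ ⟨F, rfl⟩; exact neg_le_of_abs_le (hC x a F)⟩
  have hcobdd : IsCoboundedUnder (· ≥ ·) atTop fun k => vtil r v (xk k) (fk k) (ak k) :=
    IsBoundedUnder.isCoboundedUnder_ge <|
      isBoundedUnder_of ⟨C, fun k => (vtil_le_self (hv _ _)).trans (le_of_abs_le (hC _ _ _))⟩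
  refine le_of_forall_gt_imp_ge_of_dense fun c hc => ?_
  exact vtil_le_of_frequently_vtil_lt hv hvlsc hx ha hf0 hf (frequently_lt_of_liminf_lt hcobdd hc)

theorem robust_value_lsc (n : ℕ) {A : Type*} [MetricSpace A] (r : ℝ) (hr : 0 ≤ r)
    (v : (Fin n → ℝ) → A → ProbabilityMeasure ℝ → ℝ)
    (hvb : ∃ C : ℝ, ∀ x a F, |v x a F| ≤ C)
    (hvlsc : LowerSemicontinuous
      (fun p : (Fin n → ℝ) × A × ProbabilityMeasure ℝ => v p.1 p.2.1 p.2.2))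
    (xk : ℕ → Fin n → ℝ) (x0 : Fin n → ℝ) (hx : Tendsto xk atTop (nhds x0))
    (ak : ℕ → A) (a0 : A) (ha : Tendsto ak atTop (nhds a0))
    (fk : ℕ → Measure ℝ) (f0 : Measure ℝ)
    [∀ k, IsProbabilityMeasure (fk k)] [IsProbabilityMeasure f0]
    (hfk : ∀ k, Integrable id (fk k)) (hf0 : Integrable id f0)
    (hf : Tendsto (fun k => W1e (fk k) f0) atTop (nhds 0)) :
    vtil r v x0 f0 a0 ≤ liminf (fun k => vtil r v (xk k) (fk k) (ak k)) atTop :=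
  robust_value_lsc_general n r v hvb hvlsc xk x0 hx ak a0 ha fk f0 hf0 hf
end
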